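/- arXiv:2201.03991 — 7 statements merged into one kernel-verified Lean document; each statement's English description precedes it below -/
import Mathlib

section
/- Let q be a positive definite quadratic form on ℝⁿ (n ≥ 2) with associated symmetric bilinear form, and let β be a linear form on ℝⁿ with norm ‖β‖_q < 1 (i.e., sup_{q(y)=1} β(y) < 1). Then the polynomial y ↦ q(y) - β(y)² is irreducible in the polynomial ring ℝ[y¹,...,yⁿ]. -/
/-!
If `p = f * g` with `f`, `g` non-units, both factors have positive total degree and total
degrees add up, so `f` has total degree one: it is an affine function with nonzero linear part,
and in at least two variables such a function has a nonzero root. That root is a root of `p`, but `p(y) = Q(y) - β(y)² > 0` for every `y ≠ 0`.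
-/

namespace MvPolynomial

variable {σ : Type*}

section CommRing

variable {R : Type*} [CommRing R] [Fintype σ]

lemma exists_totalDegree_le_one_eval_eq (f : (σ → R) →ₗ[R] R) :
    ∃ P : MvPolynomial σ R, P.totalDegree ≤ 1 ∧ ∀ y, eval y P = f y := by
  classical
  refine ⟨∑ i, monomial (Finsupp.single i 1) (f (Pi.single i 1)),
    totalDegree_finsetSum_le fun i _ => (totalDegree_monomial_le _ _).trans (by simp), fun y => ?_⟩
  simp [f.pi_apply_eq_sum_univ y, eval_monomial, ← Pi.single_apply, Pi.single_comm, mul_comm]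

lemma exists_totalDegree_le_two_eval_eq (Q : QuadraticMap R (σ → R) R) :
    ∃ P : MvPolynomial σ R, P.totalDegree ≤ 2 ∧ ∀ y, eval y P = Q y := by
  classical
  obtain ⟨B, rfl⟩ := LinearMap.BilinMap.toQuadraticMap_surjective Q
  choose L hL_deg hL using fun i => exists_totalDegree_le_one_eval_eq (B (Pi.single i 1))
  refine ⟨∑ i, X i * L i, totalDegree_finsetSum_le fun i _ => ?_, fun y => ?_⟩
  · have hX : (X i : MvPolynomial σ R).totalDegree ≤ 1 :=
      (totalDegree_monomial_le _ _).trans (by simp)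
    exact (totalDegree_mul _ _).trans (by grind)
  · simp [hL, B.pi_apply_eq_sum_univ y, ← Pi.single_apply, Pi.single_comm]

lemma eq_C_add_sum_C_mul_X_of_totalDegree_le_one {f : MvPolynomial σ R}
    (hf : f.totalDegree ≤ 1) :
    f = C (coeff 0 f) + ∑ i, C (coeff (Finsupp.single i 1) f) * X i := by
  classical
  ext d
  simp only [coeff_add, coeff_C, coeff_sum, coeff_C_mul, coeff_X]
  obtain h | h | h : d.degree = 0 ∨ d.degree = 1 ∨ 1 < d.degree := by omega
  · obtain rfl := (Finsupp.degree_eq_zero_iff d).mp h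
    simp
  · obtain ⟨i, rfl⟩ : d ∈ Set.range fun i => Finsupp.single i 1 := by
      rw [Finsupp.range_single_one]; exact h
    simp [Finsupp.single_left_inj, eq_comm (a := (0 : σ →₀ ℕ))]
  · have hd0 : 0 ≠ d := by rintro rfl; simp at h
    have hd1 (i : σ) : Finsupp.single i 1 ≠ d := by rintro rfl; simp at h
    simp [coeff_eq_zero_of_totalDegree_lt (hf.trans_lt h), hd0, hd1]

end CommRing

section Field

variable {K : Type*} [Field K]

lemma totalDegree_pos_of_ne_zero_of_not_isUnit {f : MvPolynomial σ K} (hf0 : f ≠ 0)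
    (hf : ¬IsUnit f) : 0 < f.totalDegree := by
  by_contra! h
  have hC : f = C (coeff 0 f) := totalDegree_eq_zero_iff_eq_C.mp (by omega)
  exact hf (hC ▸ (isUnit_iff_ne_zero.mpr fun h0 => hf0 (by rw [hC, h0, C_0])).map C)

variable [Fintype σ] [Nontrivial σ]

lemma exists_ne_zero_eval_eq_zero_of_totalDegree_eq_one {f : MvPolynomial σ K}
    (hf : f.totalDegree = 1) : ∃ y ≠ 0, eval y f = 0 := by
  classical
  set c := coeff 0 f
  set a : σ → K := fun i => coeff (Finsupp.single i 1) f
  have hf_eq := eq_C_add_sum_C_mul_X_of_totalDegree_le_one hf.le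
  have heval (y : σ → K) : eval y f = c + a ⬝ᵥ y := by
    conv_lhs => rw [hf_eq]
    simp [dotProduct, a, c]
  obtain ⟨i, hi⟩ : ∃ i, a i ≠ 0 := by
    by_contra! ha
    have : f = C c := by rw [hf_eq]; simp [a] at ha; simp [ha, c]
    simp [this] at hf
  obtain ⟨j, hji⟩ := exists_ne i
  refine ⟨Pi.single j 1 + Pi.single i (-(c + a j) / a i), fun h => ?_, ?_⟩
  · simpa [hji] using congrFun h j
  · rw [heval, dotProduct_add, dotProduct_single, dotProduct_single]
    field_simp
    ring

theorem irreducible_of_totalDegree_le_two {p : MvPolynomial σ K} (hdeg : p.totalDegree ≤ 2)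
    (hzero : ∀ y, eval y p = 0 ↔ y = 0) : Irreducible p := by
  have hp0 : p ≠ 0 := by
    rintro rfl
    obtain ⟨y, hy⟩ := exists_ne (0 : σ → K)
    exact hy ((hzero y).1 (by simp))
  refine ⟨fun hu => ?_, fun f g hfg => ?_⟩
  · exact not_isUnit_zero ((hzero 0).2 rfl ▸ hu.map (eval 0))
  by_contra! hfg_units
  obtain ⟨hf, hg⟩ := hfg_units
  have hf0 : f ≠ 0 := by rintro rfl; simp_all
  have hg0 : g ≠ 0 := by rintro rfl; simp_all
  have hdeg_fg : f.totalDegree + g.totalDegree ≤ 2 := by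
    rwa [hfg, totalDegree_mul_of_isDomain hf0 hg0] at hdeg
  have hf_pos := totalDegree_pos_of_ne_zero_of_not_isUnit hf0 hf
  have hg_pos := totalDegree_pos_of_ne_zero_of_not_isUnit hg0 hg
  obtain ⟨y, hy0, hy⟩ := exists_ne_zero_eval_eq_zero_of_totalDegree_eq_one (f := f) (by omega)
  exact hy0 ((hzero y).1 (by simp [hfg, hy]))

end Field

end MvPolynomial

open MvPolynomial

theorem stmt2_general (n : ℕ) (hn : 2 ≤ n) (Q : QuadraticForm ℝ (Fin n → ℝ))
    (β : (Fin n → ℝ) →ₗ[ℝ] ℝ)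
    (hβ : ∀ y : Fin n → ℝ, y ≠ 0 → (β y) ^ 2 < Q y)
    (p : MvPolynomial (Fin n) ℝ)
    (hp : ∀ y : Fin n → ℝ, MvPolynomial.eval y p = Q y - (β y) ^ 2) :
    Irreducible p := by
  have : Nontrivial (Fin n) := Fin.nontrivial_iff_two_le.mpr hn
  obtain ⟨P, hP_deg, hP⟩ := exists_totalDegree_le_two_eval_eq Q
  obtain ⟨L, hL_deg, hL⟩ := exists_totalDegree_le_one_eval_eq β
  have hp_eq : p = P - L ^ 2 := MvPolynomial.funext fun y => by simp [hp, hP, hL]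
  refine irreducible_of_totalDegree_le_two ?_ fun y => ⟨fun hy => ?_, ?_⟩
  · rw [hp_eq]
    exact (totalDegree_sub _ _).trans (max_le hP_deg ((totalDegree_pow _ _).trans (by omega)))
  · by_contra hy0
    linarith [hβ y hy0, hp y]
  · rintro rfl
    rw [hp]
    simp

/-- If `Q` is a positive definite quadratic form on `ℝⁿ` (`n ≥ 2`) and `β` is a
linear form with `‖β‖_Q < 1` (i.e. `β(y)² < Q(y)` for all `y ≠ 0`), then the
polynomial representing `y ↦ Q(y) - β(y)²` is irreducible in `ℝ[y¹,…,yⁿ]`. -/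
theorem stmt2 (n : ℕ) (hn : 2 ≤ n) (Q : QuadraticForm ℝ (Fin n → ℝ)) (hQ : Q.PosDef)
    (β : (Fin n → ℝ) →ₗ[ℝ] ℝ)
    (hβ : ∀ y : Fin n → ℝ, y ≠ 0 → (β y) ^ 2 < Q y)
    (p : MvPolynomial (Fin n) ℝ)
    (hp : ∀ y : Fin n → ℝ, MvPolynomial.eval y p = Q y - (β y) ^ 2) :
    Irreducible p :=
  stmt2_general n hn Q β hβ p hp
end

section
/- Let q be a positive definite quadratic form on ℝⁿ, n ≥ 2, and β a linear form with ‖β‖_q < 1. Suppose e is a quadratic form on ℝⁿ and P₂, P₃, P₄ are polynomial functions such that (1/4)ν·e(y)² + (q(y) - β(y)²)·(P₂(y) + 2β(y)P₃(y) + (q(y) + 3β(y)²)P₄(y)) = 0 for all y, where ν ≠ 0 is a real constant. Then there exists a real constant c such that e(y) = 2c(q(y) - β(y)²) for all y. -/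
/-!
On a line `s ↦ s • u + v` avoiding the origin, `q - β²` restricts to a quadratic polynomial
without real roots, hence irreducible, and the identity makes it divide the square of the
restriction of `e`, hence that restriction itself; since both have degree at most two,
`e = k (q - β²)` on the line. Comparing the coefficients of `s²` and `1` gives
`(q - β²)(u) e(v) = e(u) (q - β²)(v)`, so `e / (q - β²)` is constant.
-/

open Polynomial

theorem Polynomial.exists_eq_C_mul_of_dvd_sq {K : Type*} [Field K] {G E : K[X]}
    (hG : G.natDegree ∈ Finset.Icc 1 3) (hroot : ∀ x, ¬ G.IsRoot x)
    (hE : E.natDegree ≤ G.natDegree) (hdvd : G ∣ E ^ 2) : ∃ k, E = C k * G := by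
  have hprime : Prime G := (irreducible_of_degree_le_three_of_not_isRoot hG hroot).prime
  obtain ⟨H, rfl⟩ := hprime.dvd_of_dvd_pow hdvd
  by_cases hH : H = 0
  · exact ⟨0, by simp [hH]⟩
  · rw [natDegree_mul hprime.ne_zero hH] at hE
    exact ⟨H.coeff 0, by rw [mul_comm, ← eq_C_of_natDegree_eq_zero (by omega)]⟩

section Line

variable {R V : Type*} [CommRing R] [AddCommGroup V] [Module R V]

def IsPolynomialOnLine (f : V → R) (u v : V) : Prop :=
  ∃ P : R[X], ∀ s, P.eval s = f (s • u + v)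

namespace IsPolynomialOnLine

variable {f g : V → R} {u v : V}

theorem const (c : R) : IsPolynomialOnLine (fun _ : V => c) u v :=
  ⟨C c, fun _ => eval_C⟩

theorem add (hf : IsPolynomialOnLine f u v) (hg : IsPolynomialOnLine g u v) :
    IsPolynomialOnLine (fun y => f y + g y) u v := by
  obtain ⟨P, hP⟩ := hf
  obtain ⟨Q, hQ⟩ := hg
  exact ⟨P + Q, fun s => by rw [eval_add, hP, hQ]⟩

theorem mul (hf : IsPolynomialOnLine f u v) (hg : IsPolynomialOnLine g u v) :
    IsPolynomialOnLine (fun y => f y * g y) u v := by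
  obtain ⟨P, hP⟩ := hf
  obtain ⟨Q, hQ⟩ := hg
  exact ⟨P * Q, fun s => by rw [eval_mul, hP, hQ]⟩

theorem pow (hf : IsPolynomialOnLine f u v) (k : ℕ) :
    IsPolynomialOnLine (fun y => f y ^ k) u v := by
  obtain ⟨P, hP⟩ := hf
  exact ⟨P ^ k, fun s => by rw [eval_pow, hP]⟩

theorem linearMap (β : V →ₗ[R] R) : IsPolynomialOnLine β u v :=
  ⟨C (β u) * X + C (β v), fun s => by
    simp only [eval_add, eval_mul, eval_C, eval_X, map_add, map_smul, smul_eq_mul]; ring⟩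

end IsPolynomialOnLine

namespace QuadraticMap

noncomputable def alongLine (φ : QuadraticMap R V R) (u v : V) : R[X] :=
  C (φ u) * X ^ 2 + C (polar φ u v) * X + C (φ v)

theorem eval_alongLine (φ : QuadraticMap R V R) (u v : V) (s : R) :
    (φ.alongLine u v).eval s = φ (s • u + v) := by
  rw [QuadraticMap.map_add φ, QuadraticMap.map_smul, polar_smul_left]
  simp only [alongLine, eval_add, eval_mul, eval_pow, eval_C, eval_X, smul_eq_mul]
  ring

theorem isPolynomialOnLine (φ : QuadraticMap R V R) (u v : V) : IsPolynomialOnLine φ u v :=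
  ⟨φ.alongLine u v, φ.eval_alongLine u v⟩

end QuadraticMap

theorem MvPolynomial.isPolynomialOnLine_eval {σ : Type*} (p : MvPolynomial σ R) (u v : σ → R) :
    IsPolynomialOnLine (fun y => eval y p) u v := by
  refine ⟨aeval (fun i => Polynomial.C (u i) * Polynomial.X + Polynomial.C (v i)) p, fun s => ?_⟩
  rw [← Polynomial.coe_aeval_eq_eval, ← AlgHom.comp_apply, comp_aeval]
  change eval _ p = _
  congr 2
  ext i
  simp only [map_add, map_mul, Polynomial.aeval_C, Polynomial.aeval_X, Pi.add_apply,
    Pi.smul_apply, smul_eq_mul, Algebra.algebraMap_self, RingHom.id_apply]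
  ring

end Line

namespace QuadraticMap

variable {K V : Type*} [Field K] [AddCommGroup V] [Module K V] {g e : QuadraticMap K V K}

theorem alongLine_dvd_sq [Infinite K] {κ : K} (hκ : κ ≠ 0) {F : V → K} {u v : V}
    (hF : IsPolynomialOnLine F u v) (h : ∀ y, κ * e y ^ 2 + g y * F y = 0) :
    g.alongLine u v ∣ e.alongLine u v ^ 2 := by
  obtain ⟨P, hP⟩ := hF
  have hpoly : C κ * e.alongLine u v ^ 2 = g.alongLine u v * -P := by
    refine Polynomial.funext fun s => ?_
    simp only [eval_mul, eval_pow, eval_neg, eval_C, eval_alongLine, hP]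
    linear_combination h (s • u + v)
  exact (isUnit_C.2 hκ.isUnit).dvd_mul_left.1 ⟨_, hpoly⟩

theorem mul_apply_eq_of_alongLine_dvd_sq {u v : V} (hu : g u ≠ 0)
    (hline : ∀ s : K, g (s • u + v) ≠ 0) (hdvd : g.alongLine u v ∣ e.alongLine u v ^ 2) :
    g u * e v = e u * g v := by
  have hdeg : (g.alongLine u v).natDegree = 2 := natDegree_quadratic hu
  have hroot : ∀ s, ¬ (g.alongLine u v).IsRoot s := fun s => by
    rw [IsRoot, eval_alongLine]; exact hline s
  have hE : (e.alongLine u v).natDegree ≤ (g.alongLine u v).natDegree :=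
    hdeg ▸ natDegree_quadratic_le
  obtain ⟨k, hk⟩ := exists_eq_C_mul_of_dvd_sq (by simp [hdeg]) hroot hE hdvd
  have hu' : e u = k * g u := by simpa [alongLine] using congrArg (coeff · 2) hk
  have hv' : e v = k * g v := by simpa [alongLine] using congrArg (coeff · 0) hk
  rw [hu', hv']
  ring

theorem exists_eq_mul_of_anisotropic_of_alongLine_dvd_sq (hg : g.Anisotropic)
    (hdvd : ∀ u v, g.alongLine u v ∣ e.alongLine u v ^ 2) : ∃ c, ∀ y, e y = c * g y := by
  rcases subsingleton_or_nontrivial V with hV | hV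
  · exact ⟨0, fun y => by rw [Subsingleton.elim y 0, map_zero, zero_mul]⟩
  · obtain ⟨u, hu⟩ := exists_ne (0 : V)
    have hgu : g u ≠ 0 := fun h0 => hu (hg u h0)
    refine ⟨e u / g u, fun y => ?_⟩
    by_cases hline : ∃ s : K, s • u + y = 0
    · obtain ⟨s, hs⟩ := hline
      rw [eq_neg_of_add_eq_zero_right hs, QuadraticMap.map_neg, QuadraticMap.map_neg,
        QuadraticMap.map_smul, QuadraticMap.map_smul, smul_eq_mul, smul_eq_mul]
      field_simp
    · rw [not_exists] at hline
      have hcross :=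
        mul_apply_eq_of_alongLine_dvd_sq hgu (fun s h0 => hline s (hg _ h0)) (hdvd u y)
      field_simp
      linear_combination hcross

end QuadraticMap

open QuadraticMap IsPolynomialOnLine

theorem stmt3_general (n : ℕ) (Q : QuadraticForm ℝ (Fin n → ℝ))
    (β : (Fin n → ℝ) →ₗ[ℝ] ℝ)
    (hβ : ∀ y : Fin n → ℝ, y ≠ 0 → (β y) ^ 2 < Q y)
    (e : QuadraticForm ℝ (Fin n → ℝ))
    (P₂ P₃ P₄ : MvPolynomial (Fin n) ℝ) (ν : ℝ) (hν : ν ≠ 0)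
    (h : ∀ y : Fin n → ℝ,
      (1 / 4) * ν * (e y) ^ 2 +
        (Q y - (β y) ^ 2) *
          (MvPolynomial.eval y P₂ + 2 * β y * MvPolynomial.eval y P₃ +
            (Q y + 3 * (β y) ^ 2) * MvPolynomial.eval y P₄) = 0) :
    ∃ c : ℝ, ∀ y : Fin n → ℝ, e y = 2 * c * (Q y - (β y) ^ 2) := by
  set g : QuadraticForm ℝ (Fin n → ℝ) := Q - sq.comp β
  have hg_apply (y : Fin n → ℝ) : g y = Q y - β y ^ 2 := by simp [g, pow_two]
  have hg : g.Anisotropic := fun y hy => by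
    by_contra hy0
    linarith [hβ y hy0, hg_apply y]
  have hF (u v : Fin n → ℝ) : IsPolynomialOnLine (fun y => MvPolynomial.eval y P₂ +
      2 * β y * MvPolynomial.eval y P₃ + (Q y + 3 * β y ^ 2) * MvPolynomial.eval y P₄) u v :=
    ((P₂.isPolynomialOnLine_eval u v).add
        (((const 2).mul (linearMap β)).mul (P₃.isPolynomialOnLine_eval u v))).add
      (((Q.isPolynomialOnLine u v).add ((const 3).mul ((linearMap β).pow 2))).mul
        (P₄.isPolynomialOnLine_eval u v))
  have hκ : 1 / 4 * ν ≠ 0 := mul_ne_zero (by norm_num) hν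
  obtain ⟨c, hc⟩ := exists_eq_mul_of_anisotropic_of_alongLine_dvd_sq (e := e) hg fun u v =>
    alongLine_dvd_sq hκ (hF u v) fun y => by rw [hg_apply]; exact h y
  exact ⟨c / 2, fun y => by rw [hc, hg_apply]; ring⟩

/-- Algebraic core of Lemma 3.1: if `ν ≠ 0` and
`(1/4)ν e(y)² + (Q(y) - β(y)²)(P₂(y) + 2β(y)P₃(y) + (Q(y) + 3β(y)²)P₄(y)) = 0`
for all `y`, with `Q` positive definite, `β` a linear form of `Q`-norm `< 1`, and
`e` a quadratic form, `P₂, P₃, P₄` polynomial functions, then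
`e = 2c(Q - β²)` for some constant `c`. -/
theorem stmt3 (n : ℕ) (hn : 2 ≤ n) (Q : QuadraticForm ℝ (Fin n → ℝ)) (hQ : Q.PosDef)
    (β : (Fin n → ℝ) →ₗ[ℝ] ℝ)
    (hβ : ∀ y : Fin n → ℝ, y ≠ 0 → (β y) ^ 2 < Q y)
    (e : QuadraticForm ℝ (Fin n → ℝ))
    (P₂ P₃ P₄ : MvPolynomial (Fin n) ℝ) (ν : ℝ) (hν : ν ≠ 0)
    (h : ∀ y : Fin n → ℝ,
      (1 / 4) * ν * (e y) ^ 2 +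
        (Q y - (β y) ^ 2) *
          (MvPolynomial.eval y P₂ + 2 * β y * MvPolynomial.eval y P₃ +
            (Q y + 3 * (β y) ^ 2) * MvPolynomial.eval y P₄) = 0) :
    ∃ c : ℝ, ∀ y : Fin n → ℝ, e y = 2 * c * (Q y - (β y) ^ 2) :=
  stmt3_general n Q β hβ e P₂ P₃ P₄ ν hν h
end

section
/- Let h be a Riemannian metric on a manifold M, W a vector field with h-norm ‖W‖_h < 1 everywhere, and λ := 1 - ‖W‖²_h. Define a_{ij} := h_{ij}/λ + W_i W_j/λ², b_i := -W_i/λ, where W_i := h_{ij}W^j. Then for every x ∈ M and every tangent vector y ≠ 0, the function F(x,y) := √(a_{ij}y^i y^j) + b_i y^i satisfies ‖y/F(x,y) - W‖_h = 1. -/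
set_option maxHeartbeats 800000

open scoped RealInnerProductSpace

/-- Navigation description of Randers metrics, pointwise: with
`λ = 1 - ‖W‖²`, `a(u,v) = ⟪u,v⟫/λ + ⟪W,u⟫⟪W,v⟫/λ²`, `b(v) = -⟪W,v⟫/λ`,
the Randers norm `F(y) = √(a(y,y)) + b(y)` satisfies `‖y/F(y) - W‖ = 1`
for every `y ≠ 0`. -/
theorem stmt4 {E : Type*} [NormedAddCommGroup E] [InnerProductSpace ℝ E]
    [FiniteDimensional ℝ E]
    (W : E) (hW : ‖W‖ < 1) (y : E) (hy : y ≠ 0) :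
    ‖(Real.sqrt (⟪y, y⟫ / (1 - ‖W‖ ^ 2) + ⟪W, y⟫ * ⟪W, y⟫ / (1 - ‖W‖ ^ 2) ^ 2) +
        (-⟪W, y⟫ / (1 - ‖W‖ ^ 2)))⁻¹ • y - W‖ = 1 := by
  have hl0 : (0:ℝ) < 1 - ‖W‖ ^ 2 := by nlinarith [norm_nonneg W]
  set l : ℝ := 1 - ‖W‖ ^ 2 with hl
  set s : ℝ := ⟪W, y⟫ with hs
  have hq0 : (0:ℝ) < ⟪y, y⟫ := by
    rw [real_inner_self_eq_norm_sq]
    exact pow_pos (norm_pos_iff.2 hy) 2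
  set q : ℝ := ⟪y, y⟫ with hq
  have hqnorm : q = ‖y‖ ^ 2 := real_inner_self_eq_norm_sq y
  have hyW : ⟪y, W⟫ = s := by rw [hs]; exact real_inner_comm W y
  have hW2 : ‖W‖ ^ 2 = 1 - l := by rw [hl]; ring
  have hlne : l ≠ 0 := ne_of_gt hl0
  have harg : (0:ℝ) ≤ q / l + s * s / l ^ 2 :=
    add_nonneg (le_of_lt (div_pos hq0 hl0))
      (div_nonneg (mul_self_nonneg s) (sq_nonneg l))
  have hargpos : (0:ℝ) < q / l + s * s / l ^ 2 :=
    add_pos_of_pos_of_nonneg (div_pos hq0 hl0)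
      (div_nonneg (mul_self_nonneg s) (sq_nonneg l))
  set R : ℝ := Real.sqrt (q / l + s * s / l ^ 2) with hRdef
  clear_value l s q R
  have hR0 : 0 ≤ R := hRdef ▸ Real.sqrt_nonneg _
  have hR2 : R ^ 2 = q / l + s * s / l ^ 2 := hRdef ▸ Real.sq_sqrt harg
  have hR2' : R ^ 2 = q / l + (s / l) ^ 2 := by rw [hR2]; ring
  have hsl : s / l < R := by
    have h1 : (s / l) ^ 2 < R ^ 2 := by
      rw [hR2']; linarith [div_pos hq0 hl0]
    have h2 : |s / l| < |R| := by
      rw [← Real.sqrt_sq_eq_abs, ← Real.sqrt_sq_eq_abs]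
      exact Real.sqrt_lt_sqrt (sq_nonneg _) h1
    calc s / l ≤ |s / l| := le_abs_self _
    _ < |R| := h2
    _ = R := abs_of_nonneg hR0
  have hF0 : 0 < R + (-s / l) := by
    have : -s / l = -(s / l) := by ring
    rw [this]; linarith
  set F : ℝ := R + (-s / l) with hF
  have hFne : F ≠ 0 := ne_of_gt hF0
  clear_value F
  have hRl : R ^ 2 * l ^ 2 = q * l + s * s := by
    rw [hR2]; field_simp
  have hmain : q - 2 * (F * s) = l * F ^ 2 := by
    apply mul_left_cancel₀ (pow_ne_zero 2 hlne)
    rw [hF]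
    field_simp
    ring_nf
    ring_nf at hRl
    nlinarith [hRl]
  have key : ‖F⁻¹ • y - W‖ ^ 2 = 1 := by
    rw [norm_sub_sq_real, inner_smul_left, hyW, norm_smul]
    simp only [RCLike.conj_to_real, Real.norm_eq_abs]
    rw [mul_pow, sq_abs, ← hqnorm, hW2]
    have e2 : F⁻¹ ^ 2 * q - 2 * (F⁻¹ * s) = l := by
      have e : F⁻¹ ^ 2 * (q - 2 * (F * s)) = F⁻¹ ^ 2 * (l * F ^ 2) := by rw [hmain]
      have e3 : F⁻¹ ^ 2 * (l * F ^ 2) = l := by field_simp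
      have e4 : F⁻¹ ^ 2 * (q - 2 * (F * s)) = F⁻¹ ^ 2 * q - 2 * (F⁻¹ * s) := by
        field_simp
      rw [e4, e3] at e; exact e
    linarith [e2]
  have hn : (0:ℝ) ≤ ‖F⁻¹ • y - W‖ := norm_nonneg _
  set n : ℝ := ‖F⁻¹ • y - W‖ with hnd
  clear_value n
  nlinarith [key, hn]
end

section
/- Let h be a positive definite inner product on ℝⁿ and W a vector with ‖W‖_h < 1, λ := 1 - ‖W‖²_h. For y ≠ 0 define F(y) := (√(λ h(y,y) + h(W,y)²) - h(W,y))/λ. Then F(y) > 0 and ‖y/F(y) - W‖_h = 1; moreover F is the unique positive number with this property. -/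
open scoped RealInnerProductSpace

/-- Pointwise navigation formula (1.3): for `‖W‖ < 1`, `λ = 1 - ‖W‖²` and `y ≠ 0`,
`F(y) = (√(λ⟪y,y⟫ + ⟪W,y⟫²) - ⟪W,y⟫)/λ` is positive, satisfies
`‖y/F(y) - W‖ = 1`, and is the unique positive number with this property. -/
theorem stmt5 {E : Type*} [NormedAddCommGroup E] [InnerProductSpace ℝ E]
    [FiniteDimensional ℝ E]
    (W : E) (hW : ‖W‖ < 1) (y : E) (hy : y ≠ 0) :
    0 < (Real.sqrt ((1 - ‖W‖ ^ 2) * ⟪y, y⟫ + ⟪W, y⟫ ^ 2) - ⟪W, y⟫) / (1 - ‖W‖ ^ 2) ∧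
    ‖((Real.sqrt ((1 - ‖W‖ ^ 2) * ⟪y, y⟫ + ⟪W, y⟫ ^ 2) - ⟪W, y⟫) / (1 - ‖W‖ ^ 2))⁻¹ • y - W‖ = 1 ∧
    ∀ G : ℝ, 0 < G → ‖G⁻¹ • y - W‖ = 1 →
      G = (Real.sqrt ((1 - ‖W‖ ^ 2) * ⟪y, y⟫ + ⟪W, y⟫ ^ 2) - ⟪W, y⟫) / (1 - ‖W‖ ^ 2) := by
  have hyW : (⟪y, W⟫ : ℝ) = ⟪W, y⟫ := (real_inner_comm y W).symm
  set l : ℝ := 1 - ‖W‖ ^ 2 with hl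
  set a : ℝ := ⟪y, y⟫ with ha'
  set b : ℝ := ⟪W, y⟫ with hb'
  set D : ℝ := l * a + b ^ 2 with hD'
  have hl0 : 0 < l := by
    have := norm_nonneg W
    nlinarith
  have haeq : a = ‖y‖ ^ 2 := real_inner_self_eq_norm_sq y
  have ha : 0 < a := by
    rw [haeq]; exact pow_pos (norm_pos_iff.mpr hy) 2
  have hw2 : ‖W‖ ^ 2 = 1 - l := by rw [hl]; ring
  clear_value l a b D
  have hD : b ^ 2 < D := by nlinarith
  have hDpos : 0 ≤ D := le_of_lt (lt_of_le_of_lt (sq_nonneg b) hD)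
  have habs : |b| < Real.sqrt D := by
    have h1 : Real.sqrt (b ^ 2) < Real.sqrt D := Real.sqrt_lt_sqrt (sq_nonneg b) hD
    rwa [Real.sqrt_sq_eq_abs] at h1
  have hsD : b < Real.sqrt D := lt_of_le_of_lt (le_abs_self b) habs
  have hnb : -b < Real.sqrt D := lt_of_le_of_lt (neg_le_abs b) habs
  set F : ℝ := (Real.sqrt D - b) / l with hF'
  clear_value F
  have hFpos : 0 < F := by
    rw [hF']; exact div_pos (sub_pos.mpr hsD) hl0
  have hsq : (Real.sqrt D) ^ 2 = D := Real.sq_sqrt hDpos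
  have hlF : l * F = Real.sqrt D - b := by
    rw [hF']; field_simp
  have h4 : l * (l * F ^ 2 + 2 * b * F - a) = 0 := by
    linear_combination (l * F + b + Real.sqrt D) * hlF + hsq + hD'
  have hFeq : l * F ^ 2 + 2 * b * F - a = 0 :=
    (mul_eq_zero.mp h4).resolve_left hl0.ne'
  -- characterization of the norm condition
  have key : ∀ G : ℝ, 0 < G →
      (‖G⁻¹ • y - W‖ = 1 ↔ l * G ^ 2 + 2 * b * G - a = 0) := by
    intro G hG
    have hG0 : G ≠ 0 := ne_of_gt hG
    have hn : ‖G⁻¹ • y - W‖ ^ 2 = G⁻¹ ^ 2 * a - 2 * G⁻¹ * b + ‖W‖ ^ 2 := by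
      rw [norm_sub_sq_real, norm_smul, real_inner_smul_left, hyW,
        Real.norm_eq_abs, abs_of_pos (inv_pos.mpr hG), haeq]
      ring
    have hn2 : G ^ 2 * ‖G⁻¹ • y - W‖ ^ 2 = a - 2 * b * G + ‖W‖ ^ 2 * G ^ 2 := by
      rw [hn]
      field_simp
    have hw2G : ‖W‖ ^ 2 * G ^ 2 = (1 - l) * G ^ 2 := by rw [hw2]
    constructor
    · intro h
      rw [h] at hn2
      linear_combination hn2 + G ^ 2 * hw2
    · intro h
      have h2 : G ^ 2 * ‖G⁻¹ • y - W‖ ^ 2 = G ^ 2 * 1 := by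
        rw [hn2]; linear_combination -h + G ^ 2 * hw2
      have h3 : ‖G⁻¹ • y - W‖ ^ 2 = 1 := mul_left_cancel₀ (pow_ne_zero 2 hG0) h2
      nlinarith [norm_nonneg (G⁻¹ • y - W), h3]
  refine ⟨hFpos, (key F hFpos).mpr hFeq, ?_⟩
  intro G hG hGnorm
  have hGeq : l * G ^ 2 + 2 * b * G - a = 0 := (key G hG).mp hGnorm
  have h1 : (l * G + b) ^ 2 = D := by
    linear_combination l * hGeq - hD'
  have h2 : |l * G + b| = Real.sqrt D := by
    rw [← Real.sqrt_sq_eq_abs, h1]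
  rcases abs_eq (Real.sqrt_nonneg D) |>.mp h2 with h3 | h3
  · rw [hF', eq_div_iff hl0.ne']
    linarith
  · exfalso
    linarith [mul_pos hl0 hG]
end

section
/- Let P₁, P₂, P₃, P₄, e₀₀ be polynomial functions of y ∈ ℝⁿ, β a linear form, q a positive definite quadratic form with ‖β‖_q < 1, α := √q, and ν ∈ ℝ. Suppose (1/4)ν e₀₀² + F P₁ + F² P₂ + F³ P₃ + F⁴ P₄ = 0 identically for F := α + β. Define A := (1/4)ν e₀₀² + βP₁ + (q+β²)P₂ + (3qβ+β³)P₃ + (q² + 6qβ² + β⁴)P₄ and B := P₁ + 2βP₂ + (q+3β²)P₃ + (4qβ + 4β³)P₄. Then A + αB = 0, and consequently A = 0 and B = 0 as polynomials (for n ≥ 2). -/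
open MvPolynomial

private lemma eval_line {n : ℕ} (y : Fin n → ℝ) (t : ℝ) (p : MvPolynomial (Fin n) ℝ) :
    Polynomial.eval t
      (MvPolynomial.aeval (fun i => Polynomial.C (y i) * Polynomial.X) p)
      = MvPolynomial.eval (t • y) p := by
  induction p using MvPolynomial.induction_on with
  | C a => simp
  | add p q hp hq => simp [hp, hq]
  | mul_X p i hp =>
    simp only [map_mul, aeval_X, Polynomial.eval_mul, Polynomial.eval_C, Polynomial.eval_X,
      hp, eval_X, Pi.smul_apply, smul_eq_mul]
    ring

/-- Expansion step in Lemma 3.1: if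
`(1/4)ν e₀₀² + F P₁ + F² P₂ + F³ P₃ + F⁴ P₄ = 0` for `F = α + β`, `α = √q`,
with `q` positive definite (`n ≥ 2`) and `‖β‖_q < 1`, then with
`A := (ν/4)e₀₀² + βP₁ + (q+β²)P₂ + (3qβ+β³)P₃ + (q²+6qβ²+β⁴)P₄` and
`B := P₁ + 2βP₂ + (q+3β²)P₃ + (4qβ+4β³)P₄` one has `A + αB = 0` pointwise,
and consequently `A = 0` and `B = 0`. -/
theorem stmt11 (n : ℕ) (hn : 2 ≤ n)
    (Q : QuadraticForm ℝ (Fin n → ℝ)) (hQ : Q.PosDef)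
    (βl : (Fin n → ℝ) →ₗ[ℝ] ℝ)
    (hβl : ∀ y : Fin n → ℝ, y ≠ 0 → (βl y) ^ 2 < Q y)
    (q β : MvPolynomial (Fin n) ℝ)
    (hq : ∀ y : Fin n → ℝ, eval y q = Q y)
    (hβ : ∀ y : Fin n → ℝ, eval y β = βl y)
    (P₁ P₂ P₃ P₄ e : MvPolynomial (Fin n) ℝ) (ν : ℝ)
    (h : ∀ y : Fin n → ℝ,
      (1 / 4) * ν * (eval y e) ^ 2
        + (Real.sqrt (Q y) + βl y) * eval y P₁
        + (Real.sqrt (Q y) + βl y) ^ 2 * eval y P₂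
        + (Real.sqrt (Q y) + βl y) ^ 3 * eval y P₃
        + (Real.sqrt (Q y) + βl y) ^ 4 * eval y P₄ = 0) :
    (∀ y : Fin n → ℝ,
      eval y (C (ν / 4) * e ^ 2 + β * P₁ + (q + β ^ 2) * P₂
          + (3 * q * β + β ^ 3) * P₃ + (q ^ 2 + 6 * q * β ^ 2 + β ^ 4) * P₄)
        + Real.sqrt (Q y) *
          eval y (P₁ + 2 * β * P₂ + (q + 3 * β ^ 2) * P₃
            + (4 * q * β + 4 * β ^ 3) * P₄) = 0) ∧
    C (ν / 4) * e ^ 2 + β * P₁ + (q + β ^ 2) * P₂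
        + (3 * q * β + β ^ 3) * P₃ + (q ^ 2 + 6 * q * β ^ 2 + β ^ 4) * P₄ = 0 ∧
    P₁ + 2 * β * P₂ + (q + 3 * β ^ 2) * P₃ + (4 * q * β + 4 * β ^ 3) * P₄ = 0 := by
  set A : MvPolynomial (Fin n) ℝ :=
    C (ν / 4) * e ^ 2 + β * P₁ + (q + β ^ 2) * P₂
      + (3 * q * β + β ^ 3) * P₃ + (q ^ 2 + 6 * q * β ^ 2 + β ^ 4) * P₄ with hA
  set B : MvPolynomial (Fin n) ℝ :=
    P₁ + 2 * β * P₂ + (q + 3 * β ^ 2) * P₃ + (4 * q * β + 4 * β ^ 3) * P₄ with hB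
  have hQ0 : ∀ y : Fin n → ℝ, 0 ≤ Q y := by
    intro y
    rcases eq_or_ne y 0 with rfl | hy
    · simp
    · exact (hQ y hy).le
  have key : ∀ y : Fin n → ℝ,
      eval y A + Real.sqrt (Q y) * eval y B = 0 := by
    intro y
    have hs : Real.sqrt (Q y) ^ 2 = Q y := Real.sq_sqrt (hQ0 y)
    simp only [hA, hB, map_add, map_mul, map_pow, eval_C, map_ofNat, hq y, hβ y]
    linear_combination h y -
      (eval y P₂ + (3 * βl y + Real.sqrt (Q y)) * eval y P₃
        + (Q y + Real.sqrt (Q y) ^ 2 + 6 * (βl y) ^ 2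
            + 4 * Real.sqrt (Q y) * βl y) * eval y P₄) * hs
  refine ⟨key, ?_⟩
  have main : ∀ y : Fin n → ℝ, y ≠ 0 →
      eval y A = 0 ∧ eval y B = 0 ∧ eval (0 : Fin n → ℝ) A = 0 ∧ eval (0 : Fin n → ℝ) B = 0 := by
    intro y hy
    set s : ℝ := Real.sqrt (Q y) with hsdef
    have hspos : 0 < s := Real.sqrt_pos.mpr (hQ y hy)
    set a : Polynomial ℝ := MvPolynomial.aeval (fun i => Polynomial.C (y i) * Polynomial.X) A
      with ha
    set b : Polynomial ℝ := MvPolynomial.aeval (fun i => Polynomial.C (y i) * Polynomial.X) B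
      with hb
    have hst : ∀ t : ℝ, Real.sqrt (Q (t • y)) = |t| * s := by
      intro t
      have : Q (t • y) = (t * t) * Q y := by
        simpa using QuadraticMap.map_smul Q t y
      rw [this, ← sq, Real.sqrt_mul (sq_nonneg t), Real.sqrt_sq_eq_abs, hsdef]
    have hplus : a + Polynomial.C s * (Polynomial.X * b) = 0 := by
      apply Polynomial.eq_zero_of_infinite_isRoot
      apply Set.Infinite.mono (s := Set.Ioi (0 : ℝ)) _ (Set.Ioi_infinite 0)
      intro t ht
      have hk := key (t • y)
      rw [hst t, abs_of_pos ht] at hk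
      simp only [Set.mem_setOf_eq, Polynomial.IsRoot, ha, hb, Polynomial.eval_add,
        Polynomial.eval_mul, Polynomial.eval_C, Polynomial.eval_X, eval_line]
      linear_combination hk
    have hminus : a - Polynomial.C s * (Polynomial.X * b) = 0 := by
      apply Polynomial.eq_zero_of_infinite_isRoot
      apply Set.Infinite.mono (s := Set.Iio (0 : ℝ)) _ (Set.Iio_infinite 0)
      intro t ht
      have hk := key (t • y)
      rw [hst t, abs_of_neg ht] at hk
      simp only [Set.mem_setOf_eq, Polynomial.IsRoot, ha, hb, Polynomial.eval_sub,
        Polynomial.eval_add, Polynomial.eval_mul, Polynomial.eval_C, Polynomial.eval_X, eval_line]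
      linear_combination hk
    have hb0 : b = 0 := by
      have h2' : (2 : Polynomial ℝ) * (Polynomial.C s * (Polynomial.X * b)) = 0 := by
        linear_combination hplus - hminus
      have h2 : Polynomial.C s * (Polynomial.X * b) = 0 := by
        rcases mul_eq_zero.mp h2' with h' | h'
        · norm_num at h'
        · exact h'
      have hC : (Polynomial.C s : Polynomial ℝ) ≠ 0 := by
        simpa using hspos.ne'
      rcases mul_eq_zero.mp h2 with h' | h'
      · exact absurd h' hC
      · rcases mul_eq_zero.mp h' with h'' | h''
        · exact absurd h'' Polynomial.X_ne_zero
        · exact h''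
    have ha0 : a = 0 := by
      have := hplus
      rw [hb0] at this
      simpa using this
    have e1 : eval y A = 0 := by
      have := eval_line y 1 A
      rw [← ha, ha0] at this
      simpa using this.symm
    have e2 : eval y B = 0 := by
      have := eval_line y 1 B
      rw [← hb, hb0] at this
      simpa using this.symm
    have e3 : eval (0 : Fin n → ℝ) A = 0 := by
      have := eval_line y 0 A
      rw [← ha, ha0] at this
      simpa using this.symm
    have e4 : eval (0 : Fin n → ℝ) B = 0 := by
      have := eval_line y 0 B
      rw [← hb, hb0] at this
      simpa using this.symm
    exact ⟨e1, e2, e3, e4⟩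
  have hy0 : (fun _ : Fin n => (1 : ℝ)) ≠ 0 := by
    intro hcontra
    have : (1 : ℝ) = 0 := congrFun hcontra ⟨0, by omega⟩
    norm_num at this
  constructor
  · apply MvPolynomial.funext
    intro y
    rcases eq_or_ne y 0 with rfl | hy
    · simpa using (main _ hy0).2.2.1
    · simpa using (main y hy).1
  · apply MvPolynomial.funext
    intro y
    rcases eq_or_ne y 0 with rfl | hy
    · simpa using (main _ hy0).2.2.2
    · simpa using (main y hy).2.1
end

section
/- Let h be a positive definite inner product on ℝⁿ, W with ‖W‖_h < 1, λ = 1 - ‖W‖²_h, and define the bilinear form a(u,v) := h(u,v)/λ + h(W,u)h(W,v)/λ² and linear form b(v) := -h(W,v)/λ. Then a is positive definite and the a-dual norm of b satisfies ‖b‖_a < 1; moreover ‖b‖²_a = ‖W‖²_h. -/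
open scoped RealInnerProductSpace

/-- Navigation data `(h, W) ↦ (a, b)`: with `λ = 1 - ‖W‖²`,
`a(u,v) = ⟪u,v⟫/λ + ⟪W,u⟫⟪W,v⟫/λ²` is positive definite and the `a`-dual norm
of `b(v) = -⟪W,v⟫/λ` satisfies `‖b‖²_a = ‖W‖² < 1`: namely
`b(v)² ≤ ‖W‖²·a(v,v)` for all `v`, with equality attained at some `v ≠ 0`,
and in particular `b(v)² < a(v,v)` for all `v ≠ 0`. -/
theorem stmt14 {E : Type*} [NormedAddCommGroup E] [InnerProductSpace ℝ E]
    [FiniteDimensional ℝ E] [Nontrivial E]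
    (W : E) (hW : ‖W‖ < 1) :
    (∀ u : E, u ≠ 0 →
      0 < ⟪u, u⟫ / (1 - ‖W‖ ^ 2) + ⟪W, u⟫ * ⟪W, u⟫ / (1 - ‖W‖ ^ 2) ^ 2) ∧
    (∀ v : E, (-⟪W, v⟫ / (1 - ‖W‖ ^ 2)) ^ 2
      ≤ ‖W‖ ^ 2 * (⟪v, v⟫ / (1 - ‖W‖ ^ 2) + ⟪W, v⟫ * ⟪W, v⟫ / (1 - ‖W‖ ^ 2) ^ 2)) ∧
    (∃ v : E, v ≠ 0 ∧ (-⟪W, v⟫ / (1 - ‖W‖ ^ 2)) ^ 2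
      = ‖W‖ ^ 2 * (⟪v, v⟫ / (1 - ‖W‖ ^ 2) + ⟪W, v⟫ * ⟪W, v⟫ / (1 - ‖W‖ ^ 2) ^ 2)) ∧
    (∀ v : E, v ≠ 0 → (-⟪W, v⟫ / (1 - ‖W‖ ^ 2)) ^ 2
      < ⟪v, v⟫ / (1 - ‖W‖ ^ 2) + ⟪W, v⟫ * ⟪W, v⟫ / (1 - ‖W‖ ^ 2) ^ 2) := by
  have hW0 : (0:ℝ) ≤ ‖W‖ := norm_nonneg W
  have hs : ‖W‖ ^ 2 < 1 := by nlinarith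
  have hl : (0:ℝ) < 1 - ‖W‖ ^ 2 := by linarith
  have hl2 : (0:ℝ) < (1 - ‖W‖ ^ 2) ^ 2 := by positivity
  refine ⟨?_, ?_, ?_, ?_⟩
  · intro u hu
    have hq : 0 < ⟪u, u⟫ := by
      rw [real_inner_self_eq_norm_sq]
      have := norm_pos_iff.2 hu
      positivity
    have : 0 ≤ ⟪W, u⟫ * ⟪W, u⟫ := mul_self_nonneg _
    positivity
  · intro v
    have hc : ⟪W, v⟫ * ⟪W, v⟫ ≤ ⟪W, W⟫ * ⟪v, v⟫ := real_inner_mul_inner_self_le W v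
    have hWW : ⟪W, W⟫ = ‖W‖ ^ 2 := real_inner_self_eq_norm_sq W
    rw [hWW] at hc
    rw [div_pow, neg_sq]
    rw [div_add_div _ _ (ne_of_gt hl) (ne_of_gt hl2), ← mul_div_assoc,
      div_le_div_iff₀ hl2 (by positivity)]
    nlinarith [mul_le_mul_of_nonneg_right hc (le_of_lt (mul_pos hl hl2)),
      mul_nonneg (mul_nonneg (mul_nonneg (sq_nonneg ‖W‖) (mul_self_nonneg ⟪W, v⟫)) hl.le) hl2.le]
  · by_cases hWz : W = 0
    · obtain ⟨v, hv⟩ := exists_ne (0 : E)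
      exact ⟨v, hv, by simp [hWz]⟩
    · refine ⟨W, hWz, ?_⟩
      have hWW : ⟪W, W⟫ = ‖W‖ ^ 2 := real_inner_self_eq_norm_sq W
      rw [hWW]
      field_simp
      ring
  · intro v hv
    have hq : 0 < ⟪v, v⟫ := by
      rw [real_inner_self_eq_norm_sq]
      have := norm_pos_iff.2 hv
      positivity
    rw [div_pow, neg_sq]
    have h2 : 0 < ⟪v, v⟫ / (1 - ‖W‖ ^ 2) := by positivity
    have h3 : ⟪W, v⟫ * ⟪W, v⟫ = ⟪W, v⟫ ^ 2 := (sq _).symm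
    rw [h3]
    linarith
end

section
/- Let h be a positive definite inner product on ℝⁿ, W a vector with ‖W‖_h < 1, and F the associated navigation (Randers) norm with ξ := y - F(y)W for y ≠ 0. Then h(ξ,ξ) = F(y)², F is positively homogeneous of degree 1, F(y) > 0 for y ≠ 0, and F satisfies the triangle inequality F(y₁ + y₂) ≤ F(y₁) + F(y₂); i.e., F is a Minkowski norm (in the asymmetric sense). -/
/-!
`√(λ⟪y, y⟫ + ⟪W, y⟫²)` is the ℓ²-norm of the linear image `(√λ • y, ⟪W, y⟫)` of `y` in `E × ℝ`,
so it is subadditive and positively homogeneous; subtracting the linear form `⟪W, y⟫` and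
dividing by `λ > 0` preserves both properties. Since `λ > 0` this norm strictly dominates
`|⟪W, y⟫|` for `y ≠ 0`, whence `F > 0`. Finally, `λF + ⟪W, y⟫` is that norm, and squaring shows
that `F` solves `λF² + 2⟪W, y⟫F = ⟪y, y⟫`, which is `‖y - F • W‖² = F²` expanded.
-/

open scoped RealInnerProductSpace

lemma one_sub_norm_sq_pos {E : Type*} [SeminormedAddGroup E] {W : E} (hW : ‖W‖ < 1) :
    0 < 1 - ‖W‖ ^ 2 :=
  sub_pos.mpr (pow_lt_one₀ (norm_nonneg W) hW two_ne_zero)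

section Navigation

variable {E : Type*} [NormedAddCommGroup E] [InnerProductSpace ℝ E]

noncomputable def navigationNorm (W y : E) : ℝ :=
  (Real.sqrt ((1 - ‖W‖ ^ 2) * ⟪y, y⟫ + ⟪W, y⟫ ^ 2) - ⟪W, y⟫) / (1 - ‖W‖ ^ 2)

noncomputable def navigationLift (W y : E) : WithLp 2 (E × ℝ) :=
  WithLp.toLp 2 (Real.sqrt (1 - ‖W‖ ^ 2) • y, ⟪W, y⟫)

lemma navigationLift_add (W y₁ y₂ : E) :
    navigationLift W (y₁ + y₂) = navigationLift W y₁ + navigationLift W y₂ := by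
  simp only [navigationLift, smul_add, inner_add_right, ← WithLp.toLp_add, Prod.mk_add_mk]

lemma norm_navigationLift_sq {W : E} (hW : ‖W‖ ≤ 1) (y : E) :
    ‖navigationLift W y‖ ^ 2 = (1 - ‖W‖ ^ 2) * ⟪y, y⟫ + ⟪W, y⟫ ^ 2 := by
  have hlam : 0 ≤ 1 - ‖W‖ ^ 2 := by nlinarith [norm_nonneg W]
  rw [WithLp.prod_norm_sq_eq_of_L2, navigationLift, WithLp.toLp_fst, WithLp.toLp_snd,
    norm_smul, mul_pow, Real.norm_of_nonneg (Real.sqrt_nonneg _), Real.sq_sqrt hlam,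
    real_inner_self_eq_norm_sq, Real.norm_eq_abs, sq_abs]

lemma navigationNorm_eq {W : E} (hW : ‖W‖ ≤ 1) (y : E) :
    navigationNorm W y = (‖navigationLift W y‖ - ⟪W, y⟫) / (1 - ‖W‖ ^ 2) := by
  rw [navigationNorm, ← norm_navigationLift_sq hW, Real.sqrt_sq (norm_nonneg _)]

lemma abs_inner_lt_norm_navigationLift {W y : E} (hW : ‖W‖ < 1) (hy : y ≠ 0) :
    |⟪W, y⟫| < ‖navigationLift W y‖ := by
  have hlam := one_sub_norm_sq_pos hW
  have hy2 : 0 < ⟪y, y⟫ := real_inner_self_pos.mpr hy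
  refine abs_lt_of_sq_lt_sq ?_ (norm_nonneg _)
  rw [norm_navigationLift_sq hW.le]
  nlinarith

lemma navigationNorm_pos {W y : E} (hW : ‖W‖ < 1) (hy : y ≠ 0) : 0 < navigationNorm W y := by
  rw [navigationNorm_eq hW.le]
  exact div_pos (sub_pos.mpr (lt_of_abs_lt (abs_inner_lt_norm_navigationLift hW hy)))
    (one_sub_norm_sq_pos hW)

lemma navigationNorm_add_le {W : E} (hW : ‖W‖ < 1) (y₁ y₂ : E) :
    navigationNorm W (y₁ + y₂) ≤ navigationNorm W y₁ + navigationNorm W y₂ := by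
  have hlam := one_sub_norm_sq_pos hW
  simp only [navigationNorm_eq hW.le, ← add_div, navigationLift_add, inner_add_right]
  gcongr
  linarith [norm_add_le (navigationLift W y₁) (navigationLift W y₂)]

lemma navigationNorm_smul (W : E) {t : ℝ} (ht : 0 ≤ t) (y : E) :
    navigationNorm W (t • y) = t * navigationNorm W y := by
  have hrad : (1 - ‖W‖ ^ 2) * ⟪t • y, t • y⟫ + ⟪W, t • y⟫ ^ 2
      = t ^ 2 * ((1 - ‖W‖ ^ 2) * ⟪y, y⟫ + ⟪W, y⟫ ^ 2) := by
    simp only [real_inner_smul_left, real_inner_smul_right]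
    ring
  rw [navigationNorm, navigationNorm, hrad, Real.sqrt_mul (sq_nonneg t), Real.sqrt_sq ht,
    real_inner_smul_right]
  ring

lemma navigationNorm_quadratic {W : E} (hW : ‖W‖ < 1) (y : E) :
    (1 - ‖W‖ ^ 2) * navigationNorm W y ^ 2 + 2 * ⟪W, y⟫ * navigationNorm W y = ⟪y, y⟫ := by
  have hlam := one_sub_norm_sq_pos hW
  have hroot : (1 - ‖W‖ ^ 2) * navigationNorm W y + ⟪W, y⟫ = ‖navigationLift W y‖ := by
    rw [navigationNorm_eq hW.le]
    field_simp
    ring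
  have hsq := norm_navigationLift_sq hW.le y
  rw [← hroot] at hsq
  refine mul_left_cancel₀ hlam.ne' ?_
  linear_combination hsq

lemma inner_sub_navigationNorm_smul_self {W : E} (hW : ‖W‖ < 1) (y : E) :
    ⟪y - navigationNorm W y • W, y - navigationNorm W y • W⟫ = navigationNorm W y ^ 2 := by
  rw [inner_sub_sub_self, real_inner_smul_left, real_inner_smul_right, real_inner_smul_left,
    real_inner_smul_right, real_inner_comm W y, real_inner_self_eq_norm_sq W]
  linear_combination -navigationNorm_quadratic hW y

end Navigation

theorem stmt17_general {E : Type*} [NormedAddCommGroup E] [InnerProductSpace ℝ E]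
    (W : E) (hW : ‖W‖ < 1)
    (F : E → ℝ)
    (hF : ∀ y : E, F y
      = (Real.sqrt ((1 - ‖W‖ ^ 2) * ⟪y, y⟫ + ⟪W, y⟫ ^ 2) - ⟪W, y⟫) / (1 - ‖W‖ ^ 2)) :
    (∀ y : E, y ≠ 0 → 0 < F y) ∧
    (∀ y : E, y ≠ 0 → ⟪y - F y • W, y - F y • W⟫ = (F y) ^ 2) ∧
    (∀ (t : ℝ), 0 < t → ∀ y : E, F (t • y) = t * F y) ∧
    (∀ y₁ y₂ : E, F (y₁ + y₂) ≤ F y₁ + F y₂) := by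
  obtain rfl : F = navigationNorm W := funext hF
  exact ⟨fun _ hy ↦ navigationNorm_pos hW hy,
    fun y _ ↦ inner_sub_navigationNorm_smul_self hW y,
    fun _ ht ↦ navigationNorm_smul W ht.le,
    navigationNorm_add_le hW⟩

/-- The navigation construction produces a Minkowski norm: with `‖W‖ < 1`,
`λ = 1 - ‖W‖²` and `F(y) = (√(λ⟪y,y⟫ + ⟪W,y⟫²) - ⟪W,y⟫)/λ`, one has
`F(y) > 0` and `⟪y - F(y)W, y - F(y)W⟫ = F(y)²` for `y ≠ 0`, `F` is positively
1-homogeneous, and `F` is subadditive. -/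
theorem stmt17 {E : Type*} [NormedAddCommGroup E] [InnerProductSpace ℝ E]
    [FiniteDimensional ℝ E]
    (W : E) (hW : ‖W‖ < 1)
    (F : E → ℝ)
    (hF : ∀ y : E, F y
      = (Real.sqrt ((1 - ‖W‖ ^ 2) * ⟪y, y⟫ + ⟪W, y⟫ ^ 2) - ⟪W, y⟫) / (1 - ‖W‖ ^ 2)) :
    (∀ y : E, y ≠ 0 → 0 < F y) ∧
    (∀ y : E, y ≠ 0 → ⟪y - F y • W, y - F y • W⟫ = (F y) ^ 2) ∧
    (∀ (t : ℝ), 0 < t → ∀ y : E, F (t • y) = t * F y) ∧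
    (∀ y₁ y₂ : E, F (y₁ + y₂) ≤ F y₁ + F y₂) :=
  stmt17_general W hW F hF
end
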